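/- arXiv:math/9802069 — 6 statements merged into one kernel-verified Lean document; each statement's English description precedes it below -/
import Mathlib

section
/- Let p be an odd prime and let (i,j,k) be an admissible triple of natural numbers with i ≤ p-2, j ≤ p-2, k ≤ p-2. Set s = (i+j+k)/2, a = (-i+j+k)/2, b = (i-j+k)/2, c = (i+j-k)/2. Then the element ((s+1)! · a! · b! · c!) · (i! · j! · k!)^{-1} of ℤ/pℤ (which is the image ψ_p(Θ(i,j,k)) up to the sign (-1)^s, the factors i!, j!, k! being invertible mod p since i,j,k ≤ p-2) is equal to 0 if and only if i+j+k ≥ 2(p-1). -/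
/-- Vanishing criterion for the theta-net value mod `p`.  For an odd prime `p`
and an admissible triple `(i,j,k)` with `i, j, k ≤ p-2`, setting
`s = (i+j+k)/2`, `a = (-i+j+k)/2`, `b = (i-j+k)/2`, `c = (i+j-k)/2`, the
element `((s+1)!·a!·b!·c!) · (i!·j!·k!)⁻¹` of `ℤ/pℤ` vanishes if and only if
`i + j + k ≥ 2(p-1)`. -/
theorem theta_net_vanishing_criterion (p i j k : ℕ) (hp : p.Prime) (hodd : Odd p)
    (hadm₁ : k ≤ i + j) (hadm₂ : j ≤ i + k) (hadm₃ : i ≤ j + k)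
    (hadm₄ : Even (i + j + k))
    (hip : i ≤ p - 2) (hjp : j ≤ p - 2) (hkp : k ≤ p - 2) :
    (((((i + j + k) / 2 + 1).factorial * ((j + k - i) / 2).factorial *
          ((i + k - j) / 2).factorial * ((i + j - k) / 2).factorial : ℕ) : ZMod p) *
        (((i.factorial * j.factorial * k.factorial : ℕ) : ZMod p))⁻¹ = 0) ↔
      2 * (p - 1) ≤ i + j + k := by
  haveI := Fact.mk hp
  have hp2 : 2 ≤ p := hp.two_le
  have hne2 : p ≠ 2 := by rintro rfl; exact (by decide : ¬ Odd 2) hodd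
  have hp3 : 3 ≤ p := by omega
  have h2 : 2 ∣ i + j + k := hadm₄.two_dvd
  have hi : i < p := by omega
  have hj : j < p := by omega
  have hk : k < p := by omega
  have ha : (j + k - i) / 2 < p := by omega
  have hb : (i + k - j) / 2 < p := by omega
  have hc : (i + j - k) / 2 < p := by omega
  have hDnz : ((i.factorial * j.factorial * k.factorial : ℕ) : ZMod p) ≠ 0 := by
    rw [Ne, ZMod.natCast_eq_zero_iff]
    intro hdvd
    rcases hp.dvd_mul.mp hdvd with h | h
    · rcases hp.dvd_mul.mp h with h | h
      · exact absurd ((Nat.Prime.dvd_factorial hp).mp h) (by omega)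
      · exact absurd ((Nat.Prime.dvd_factorial hp).mp h) (by omega)
    · exact absurd ((Nat.Prime.dvd_factorial hp).mp h) (by omega)
  constructor
  · intro h
    rcases mul_eq_zero.mp h with h | h
    · rw [ZMod.natCast_eq_zero_iff] at h
      have hsd : p ∣ ((i + j + k) / 2 + 1).factorial := by
        rcases hp.dvd_mul.mp h with h | h
        · rcases hp.dvd_mul.mp h with h | h
          · rcases hp.dvd_mul.mp h with h | h
            · exact h
            · exact absurd ((Nat.Prime.dvd_factorial hp).mp h) (by omega)
          · exact absurd ((Nat.Prime.dvd_factorial hp).mp h) (by omega)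
        · exact absurd ((Nat.Prime.dvd_factorial hp).mp h) (by omega)
      have := (Nat.Prime.dvd_factorial hp).mp hsd
      omega
    · exact absurd (inv_eq_zero.mp h) hDnz
  · intro h
    have hps : p ≤ (i + j + k) / 2 + 1 := by omega
    have hz : ((((i + j + k) / 2 + 1).factorial : ℕ) : ZMod p) = 0 := by
      rw [ZMod.natCast_eq_zero_iff]
      exact (Nat.Prime.dvd_factorial hp).mpr hps
    push_cast
    push_cast at hz
    rw [hz]
    ring
end

section
/- Let p be an odd prime, set N_p = (p-3)/2, and let k be a natural number with 0 ≤ k ≤ N_p. Then in ℤ/pℤ the following identity holds: ((N_p - k)!)^{-1} = ((N_p + 1)!)^{-1} · (-(4)^{-1})^{k+1} · (2(k+1))! · ((k+1)!)^{-1}, where all the factorials appearing (namely (N_p-k)!, (N_p+1)!, (2k+2)! and (k+1)!, each a product of positive integers less than p) are invertible in ℤ/pℤ and (4)^{-1} denotes the inverse of 4. -/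
/-!
Put `N = (p - 3) / 2`, so that `2N + 3 = p`. The quotient `(N + 1)! / (N - k)!` is the product of
the `k + 1` numbers `N + 1, N, …, N + 1 - k`, and modulo `p` each of them satisfies
`-2 (N + 1 - i) ≡ 2i + 1`. Hence `(-2)^(k+1) (N + 1)! / (N - k)!` is the odd double factorial
`(2k + 1)‼ = (2k + 2)! / (2^(k+1) (k + 1)!)`, which rearranges to the identity.
-/

open Nat

theorem neg_two_pow_mul_descFactorial_eq_doubleFactorial {R : Type*} [CommRing R] {n k : ℕ}
    (h : ((2 * n + 3 : ℕ) : R) = 0) (hk : k ≤ n) :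
    (-2 : R) ^ (k + 1) * ((n + 1).descFactorial (k + 1) : R) = ((2 * k + 1)‼ : R) := by
  push_cast at h
  induction k with
  | zero =>
    simp only [zero_add, pow_one, Nat.descFactorial_one, Nat.doubleFactorial]
    push_cast
    linear_combination -h
  | succ k ih =>
    rw [Nat.descFactorial_succ, show 2 * (k + 1) + 1 = 2 * k + 1 + 2 by ring,
      Nat.doubleFactorial_add_two, show n + 1 - (k + 1) = n - k by omega]
    push_cast [Nat.cast_sub (by omega : k ≤ n)]
    linear_combination -2 * ((n : R) - k) * ih (by omega) - ((2 * k + 1)‼ : R) * h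

theorem neg_four_pow_mul_factorial_mul_descFactorial {R : Type*} [CommRing R] {n k : ℕ}
    (h : ((2 * n + 3 : ℕ) : R) = 0) (hk : k ≤ n) :
    (-4 : R) ^ (k + 1) * (k + 1)! * (n + 1).descFactorial (k + 1) = (2 * (k + 1))! := by
  have hsplit : (2 * (k + 1))! = 2 ^ (k + 1) * (k + 1)! * (2 * k + 1)‼ := by
    rw [show 2 * (k + 1) = 2 * k + 1 + 1 by ring, Nat.factorial_eq_mul_doubleFactorial,
      show 2 * k + 1 + 1 = 2 * (k + 1) by ring, Nat.doubleFactorial_two_mul]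
  push_cast [hsplit]
  rw [← neg_two_pow_mul_descFactorial_eq_doubleFactorial h hk,
    show (-4 : R) = 2 * -2 by norm_num, mul_pow]
  ring

theorem inv_factorial_sub_eq {K : Type*} [Field K] {n k : ℕ} (h : ((2 * n + 3 : ℕ) : K) = 0)
    (hfac : ((n + 1)! : K) ≠ 0) (hk : k ≤ n) :
    ((n - k)! : K)⁻¹ =
      ((n + 1)! : K)⁻¹ * (-(4 : K)⁻¹) ^ (k + 1) * ((2 * (k + 1))! : K) * ((k + 1)! : K)⁻¹ := by
  have h4 : (4 : K) ≠ 0 := by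
    intro h4
    push_cast at h
    -- `(3 - 2n)(2n + 3) + (n² - 2) · 4 = 1`
    exact one_ne_zero (α := K) (by linear_combination (3 - 2 * n : K) * h + (n ^ 2 - 2 : K) * h4)
  have hk_fac : ((k + 1)! : K) ≠ 0 := by
    obtain ⟨m, hm⟩ := Nat.factorial_dvd_factorial (by omega : k + 1 ≤ n + 1)
    rw [hm, Nat.cast_mul] at hfac
    exact left_ne_zero_of_mul hfac
  rw [← Nat.factorial_mul_descFactorial (by omega : k + 1 ≤ n + 1), Nat.add_sub_add_right,
    Nat.cast_mul] at hfac ⊢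
  have hsub_fac := left_ne_zero_of_mul hfac
  have hdesc := right_ne_zero_of_mul hfac
  have h4_pow : (-4 : K) ^ (k + 1) ≠ 0 := pow_ne_zero _ (neg_ne_zero.mpr h4)
  rw [← neg_four_pow_mul_factorial_mul_descFactorial h hk, neg_inv, inv_pow]
  field_simp

/-- Key factorial identity in `ℤ/pℤ`: for an odd prime `p`, `N_p = (p-3)/2`
and `0 ≤ k ≤ N_p`,
`((N_p - k)!)⁻¹ = ((N_p + 1)!)⁻¹ · (-(4)⁻¹)^{k+1} · (2(k+1))! · ((k+1)!)⁻¹`. -/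
theorem factorial_identity_mod_p (p k : ℕ) (hp : p.Prime) (hodd : Odd p)
    (hk : k ≤ (p - 3) / 2) :
    ((((p - 3) / 2 - k).factorial : ZMod p))⁻¹ =
      ((((p - 3) / 2 + 1).factorial : ZMod p))⁻¹ * (-(4 : ZMod p)⁻¹) ^ (k + 1) *
        (((2 * (k + 1)).factorial : ZMod p)) * (((k + 1).factorial : ZMod p))⁻¹ := by
  have := Fact.mk hp
  have hp_eq : 2 * ((p - 3) / 2) + 3 = p := by
    have := hp.two_le
    have := Nat.odd_iff.mp hodd
    omega
  refine inv_factorial_sub_eq (by rw [hp_eq, ZMod.natCast_self]) ?_ hk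
  rw [Ne, ZMod.natCast_eq_zero_iff, hp.dvd_factorial]
  omega
end

section
/- Let m be a natural number and let P ∈ ℚ[X] be a polynomial such that P(-X) = -P(X) (P is odd), deg P ≤ 2m+1, and P(n) ∈ ℤ for every integer n. Then there exist integers c_0, c_1, ..., c_m such that P(X) = ∑_{k=0}^{m} c_k · C(X+k, 2k+1), where C(X+k, 2k+1) = (X+k)(X+k-1)···(X-k) / (2k+1)! is the binomial-coefficient polynomial of degree 2k+1. -/
open Polynomial

/-- The binomial-coefficient polynomial `C(X+k, 2k+1)
= (X+k)(X+k-1)···(X-k) / (2k+1)!`, an odd polynomial of degree `2k+1`. -/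
noncomputable def binomShiftPoly (k : ℕ) : Polynomial ℚ :=
  Polynomial.C (((2 * k + 1).factorial : ℚ)⁻¹) *
    ∏ j ∈ Finset.range (2 * k + 1), (Polynomial.X + Polynomial.C ((k : ℚ) - (j : ℚ)))

/-!
Each `C(X+k, 2k+1)` is odd of exact degree `2k+1`, so subtracting suitable multiples from
the top degree down writes an odd `P` of degree `≤ 2m+1` as `∑ q_k C(X+k, 2k+1)` with
`q_k ∈ ℚ`. At `X = n+1` the basis polynomial takes the value `C(n+1+k, 2k+1)`, an integer
that is `0` for `k > n` and `1` for `k = n`; hence the integers `P(1), …, P(m+1)` are a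
unitriangular integral transform of `q_0, …, q_m`, which forces every `q_k` into `ℤ`.
-/

open Finset

section OddPolynomial

variable {R : Type*} [CommRing R]

theorem coeff_comp_neg_X (p : R[X]) (n : ℕ) : (p.comp (-X)).coeff n = (-1) ^ n * p.coeff n := by
  rw [← neg_one_mul (X : R[X]), ← C_1, ← C_neg, comp_C_mul_X_coeff, mul_comm]

theorem coeff_eq_zero_of_comp_neg_X_eq_neg [NoZeroDivisors R] [CharZero R] {p : R[X]}
    (hp : p.comp (-X) = -p) {n : ℕ} (hn : Even n) : p.coeff n = 0 := by
  have h := congrArg (coeff · n) hp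
  simp only [coeff_comp_neg_X, hn.neg_one_pow, one_mul, coeff_neg] at h
  exact self_eq_neg.mp h

end OddPolynomial

theorem mem_of_unitriangular_sum_mem {R : Type*} [Ring R] (S : Subring R) {m : ℕ} {q : ℕ → R}
    {e : ℕ → ℕ → R} (he : ∀ k j, j < k → e k j ∈ S) (hdiag : ∀ k, e k k = 1)
    (hsum : ∀ k ≤ m, ∑ j ∈ range (k + 1), q j * e k j ∈ S) : ∀ k ≤ m, q k ∈ S := by
  intro k
  induction k using Nat.strong_induction_on with
  | _ k ih =>
    intro hk
    have hqk : q k = ∑ j ∈ range (k + 1), q j * e k j - ∑ j ∈ range k, q j * e k j := by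
      rw [sum_range_succ, hdiag, mul_one, add_sub_cancel_left]
    rw [hqk]
    refine sub_mem (hsum k hk) (sum_mem fun j hj => ?_)
    have hjk := mem_range.1 hj
    exact mul_mem (ih j hjk (by omega)) (he k j hjk)

theorem binomShiftPoly_eval (k : ℕ) (x : ℚ) :
    (binomShiftPoly k).eval x = Ring.choose (x + k) (2 * k + 1) := by
  rw [Ring.choose_eq_smul, ← aeval_eq_smeval, aeval_def, eval₂_eq_eval_map, descPochhammer_map,
    descPochhammer_eval_eq_prod_range, binomShiftPoly, eval_mul, eval_C, eval_prod, smul_eq_mul]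
  congr 1
  refine prod_congr rfl fun j _ => ?_
  simp only [eval_add, eval_X, eval_C]
  ring

theorem binomShiftPoly_eval_natCast (k n : ℕ) :
    (binomShiftPoly k).eval (n : ℚ) = (n + k).choose (2 * k + 1) := by
  rw [binomShiftPoly_eval, ← Nat.cast_add, Ring.choose_natCast]

theorem binomShiftPoly_comp_neg_X (k : ℕ) : (binomShiftPoly k).comp (-X) = -binomShiftPoly k := by
  refine Polynomial.funext fun x => ?_
  have h : -x + k = -(x - k) := by ring
  rw [eval_comp, eval_neg, eval_X, eval_neg, binomShiftPoly_eval, binomShiftPoly_eval, h,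
    Ring.choose_neg, Int.negOnePow_odd _ ⟨k, by push_cast; ring⟩, Units.neg_smul, one_smul]
  congr 2
  push_cast
  ring

theorem binomShiftPoly_natDegree (k : ℕ) : (binomShiftPoly k).natDegree = 2 * k + 1 := by
  rw [binomShiftPoly, natDegree_C_mul (by positivity),
    natDegree_prod_of_monic _ _ fun _ _ => monic_X_add_C _]
  simp only [natDegree_X_add_C, sum_const, card_range, smul_eq_mul, mul_one]

theorem binomShiftPoly_coeff_two_mul_add_one (k : ℕ) :
    (binomShiftPoly k).coeff (2 * k + 1) = ((2 * k + 1).factorial : ℚ)⁻¹ := by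
  conv_lhs => rw [← binomShiftPoly_natDegree k]
  rw [coeff_natDegree, binomShiftPoly, leadingCoeff_mul, leadingCoeff_C,
    (monic_prod_of_monic _ _ fun _ _ => monic_X_add_C _).leadingCoeff, mul_one]

theorem exists_eq_sum_C_mul_binomShiftPoly {P : ℚ[X]} {n : ℕ} (hodd : P.comp (-X) = -P)
    (hdeg : P.degree < ↑(2 * n)) :
    ∃ q : ℕ → ℚ, P = ∑ k ∈ range n, C (q k) * binomShiftPoly k := by
  induction n generalizing P with
  | zero => exact ⟨0, by simpa using hdeg⟩
  | succ n ih =>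
    set a := P.coeff (2 * n + 1) * (2 * n + 1).factorial
    set Q := P - C a * binomShiftPoly n
    have hQodd : Q.comp (-X) = -Q := by
      rw [sub_comp, mul_comp, C_comp, hodd, binomShiftPoly_comp_neg_X]
      ring
    have hQdeg : Q.degree < ↑(2 * n) := by
      rw [degree_lt_iff_coeff_zero]
      intro i hi
      obtain rfl | rfl | hi : i = 2 * n ∨ i = 2 * n + 1 ∨ 2 * (n + 1) ≤ i := by omega
      · exact coeff_eq_zero_of_comp_neg_X_eq_neg hQodd (even_two_mul n)
      · rw [coeff_sub, coeff_C_mul, binomShiftPoly_coeff_two_mul_add_one,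
          mul_inv_cancel_right₀ (by positivity), sub_self]
      · rw [coeff_sub, coeff_C_mul, (degree_lt_iff_coeff_zero _ _).1 hdeg i hi,
          coeff_eq_zero_of_natDegree_lt (by rw [binomShiftPoly_natDegree]; omega), mul_zero,
          sub_zero]
    obtain ⟨q, hq⟩ := ih hQodd hQdeg
    refine ⟨Function.update q n a, ?_⟩
    rw [sum_range_succ, Function.update_self,
      sum_congr rfl fun k hk => by rw [Function.update_of_ne (mem_range.1 hk).ne], ← hq]
    ring

theorem binomShiftPoly_eval_natCast_succ_self (k : ℕ) :
    (binomShiftPoly k).eval ((k + 1 : ℕ) : ℚ) = 1 := by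
  rw [binomShiftPoly_eval_natCast, show k + 1 + k = 2 * k + 1 by ring, Nat.choose_self,
    Nat.cast_one]

theorem eval_sum_C_mul_binomShiftPoly_natCast_succ (q : ℕ → ℚ) {m k : ℕ} (hk : k ≤ m) :
    (∑ j ∈ range (m + 1), C (q j) * binomShiftPoly j).eval ((k + 1 : ℕ) : ℚ) =
      ∑ j ∈ range (k + 1), q j * (binomShiftPoly j).eval ((k + 1 : ℕ) : ℚ) := by
  simp only [eval_finsetSum, eval_mul, eval_C]
  refine (sum_subset (range_subset_range.2 (by omega)) fun j _ hj => ?_).symm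
  rw [binomShiftPoly_eval_natCast, Nat.choose_eq_zero_of_lt (by simp at hj; omega),
    Nat.cast_zero, mul_zero]

/-- Every odd integer-valued polynomial of degree at most `2m+1` is a
`ℤ`-linear combination of the polynomials `C(X+k, 2k+1)`, `0 ≤ k ≤ m`. -/
theorem odd_integer_valued_polynomial_basis (m : ℕ) (P : Polynomial ℚ)
    (hodd : P.comp (-Polynomial.X) = -P)
    (hdeg : P.natDegree ≤ 2 * m + 1)
    (hint : ∀ n : ℤ, ∃ z : ℤ, P.eval (n : ℚ) = (z : ℚ)) :
    ∃ c : ℕ → ℤ,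
      P = ∑ k ∈ Finset.range (m + 1), Polynomial.C ((c k : ℚ)) * binomShiftPoly k := by
  obtain ⟨q, hq⟩ := exists_eq_sum_C_mul_binomShiftPoly (n := m + 1) hodd
    ((degree_le_of_natDegree_le hdeg).trans_lt (by exact_mod_cast (by omega)))
  have hq_int : ∀ k ≤ m, q k ∈ (⊥ : Subring ℚ) := by
    refine mem_of_unitriangular_sum_mem ⊥
      (e := fun k j => (binomShiftPoly j).eval ((k + 1 : ℕ) : ℚ)) (fun k j _ => ?_)
      binomShiftPoly_eval_natCast_succ_self fun k hk => ?_
    · exact Subring.mem_bot.2 ⟨_, by rw [binomShiftPoly_eval_natCast, Int.cast_natCast]⟩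
    · obtain ⟨z, hz⟩ := hint (k + 1)
      rw [← eval_sum_C_mul_binomShiftPoly_natCast_succ q hk, ← hq]
      exact Subring.mem_bot.2 ⟨z, by rw [← hz]; push_cast; rfl⟩
  refine ⟨fun k => ⌊q k⌋, hq.trans (sum_congr rfl fun k hk => ?_)⟩
  obtain ⟨z, hz⟩ := Subring.mem_bot.1 (hq_int k (Nat.lt_succ_iff.1 (mem_range.1 hk)))
  simp only [← hz, Int.floor_intCast]
end

section
/- Let f be a nonzero real number, K a positive real number, q a real number, and P a polynomial with complex coefficients. Then both limits below exist and lim_{ε→0⁺} ∫_{-∞}^{∞} exp(iπf α²/(2K)) · exp((2πi q/K)·α) · P(α) · exp(-εα²) dα = exp(-2πi q²/(K f)) · lim_{ε→0⁺} ∫_{-∞}^{∞} exp(iπf α²/(2K)) · P(α - 2q/f) · exp(-εα²) dα. -/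
/-!
For `Re b < 0`, integration by parts shows that `Q ↦ ∫ Q(x) e^{bx² + cx} dx` vanishes on the
image of `D_{b,c} Q = Q' + (2bX + c) Q`. Via the moment recursion this makes the functionals
converge as `b = a - ε → a`, and the limit functional `L_{a,c}` still vanishes on the image of
`D_{a,c}`. Such a functional is determined by its value at `1`, since `D_{a,c}` raises degrees
by exactly one. The substitution `X ↦ X - c/(2a)` turns `D_{a,c}` into `D_{a,0}`, so
`Q ↦ L_{a,0}(Q(X - c/(2a)))` also vanishes on the image of `D_{a,c}`; comparing values at `1`,
which are Gaussian integrals, gives the factor `e^{-c²/(4a)}`.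
-/

open MeasureTheory Topology Real Filter Polynomial Complex

noncomputable section

section Algebra

variable {𝕜 : Type*} [Field 𝕜]

/-- `e^{-(ax² + cx)} (d/dx) (Q e^{ax² + cx})`. -/
def gaussDeriv (a c : 𝕜) : 𝕜[X] →ₗ[𝕜] 𝕜[X] :=
  derivative + LinearMap.mulLeft 𝕜 (C (2 * a) * X + C c)

@[simp]
theorem gaussDeriv_apply (a c : 𝕜) (Q : 𝕜[X]) :
    gaussDeriv a c Q = derivative Q + (C (2 * a) * X + C c) * Q :=
  rfl

theorem taylor_comp_gaussDeriv (a c s : 𝕜) :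
    taylor s ∘ₗ gaussDeriv a c = gaussDeriv a (c + 2 * a * s) ∘ₗ taylor s := by
  refine LinearMap.ext fun Q => ?_
  simp only [LinearMap.comp_apply, gaussDeriv_apply, taylor_apply, derivative_comp,
    add_comp, mul_comp, C_comp, X_comp, derivative_X, derivative_C, map_add, map_mul]
  ring

theorem LinearMap.apply_gaussDeriv_X_pow (L : 𝕜[X] →ₗ[𝕜] 𝕜) (a c : 𝕜) (n : ℕ) :
    L (gaussDeriv a c (X ^ n)) =
      n * L (X ^ (n - 1)) + 2 * a * L (X ^ (n + 1)) + c * L (X ^ n) := by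
  have : gaussDeriv a c (X ^ n) =
      C (n : 𝕜) * X ^ (n - 1) + C (2 * a) * X ^ (n + 1) + C c * X ^ n := by
    rw [gaussDeriv_apply, derivative_X_pow]
    ring
  simp only [this, map_add, ← smul_eq_C_mul, map_smul, smul_eq_mul]

theorem LinearMap.eq_zero_of_comp_gaussDeriv_eq_zero {a c : 𝕜} (ha : 2 * a ≠ 0)
    {L : 𝕜[X] →ₗ[𝕜] 𝕜} (hL : L ∘ₗ gaussDeriv a c = 0) (h1 : L 1 = 0) : L = 0 := by
  have hpow : ∀ n, L (X ^ n) = 0 := by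
    intro n
    induction n using Nat.strong_induction_on with
    | _ n ih =>
      match n with
      | 0 => simpa using h1
      | m + 1 =>
        have := L.apply_gaussDeriv_X_pow a c m
        rw [← LinearMap.comp_apply, hL, LinearMap.zero_apply,
          ih m (by omega), ih (m - 1) (by omega)] at this
        simp only [mul_zero, zero_add, add_zero] at this
        exact (mul_eq_zero.1 this.symm).resolve_left ha
  refine lhom_ext' fun n => LinearMap.ext_ring ?_
  simp [← X_pow_eq_monomial, hpow]

theorem LinearMap.eq_smul_comp_taylor_of_comp_gaussDeriv_eq_zero {a c : 𝕜} (ha : 2 * a ≠ 0)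
    {L L₀ : 𝕜[X] →ₗ[𝕜] 𝕜} (hL : L ∘ₗ gaussDeriv a c = 0)
    (hL₀ : L₀ ∘ₗ gaussDeriv a 0 = 0) {e : 𝕜} (h1 : L 1 = e * L₀ 1) :
    L = e • L₀ ∘ₗ taylor (-c / (2 * a)) := by
  rw [← sub_eq_zero]
  refine eq_zero_of_comp_gaussDeriv_eq_zero (c := c) ha ?_ (by simp [h1])
  have hshift : c + 2 * a * (-c / (2 * a)) = 0 := by rw [mul_div_cancel₀ _ ha]; ring
  rw [LinearMap.sub_comp, LinearMap.smul_comp, LinearMap.comp_assoc, taylor_comp_gaussDeriv,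
    hshift, ← LinearMap.comp_assoc, hL₀, hL]
  simp

end Algebra

section Limit

variable {𝕜 ι : Type*} [NormedField 𝕜] {l : Filter ι} {J : ι → 𝕜[X] →ₗ[𝕜] 𝕜}

theorem exists_tendsto_apply_of_forall_X_pow
    (hpow : ∀ n, ∃ w, Tendsto (fun i => J i (X ^ n)) l (𝓝 w)) (Q : 𝕜[X]) :
    ∃ w, Tendsto (fun i => J i Q) l (𝓝 w) := by
  induction Q using Polynomial.induction_on' with
  | add p q hp hq =>
    obtain ⟨u, hu⟩ := hp
    obtain ⟨v, hv⟩ := hq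
    exact ⟨u + v, by simpa using hu.add hv⟩
  | monomial n k =>
    obtain ⟨w, hw⟩ := hpow n
    refine ⟨k * w, ?_⟩
    simpa [← C_mul_X_pow_eq_monomial, ← smul_eq_C_mul] using hw.const_mul k

theorem exists_tendsto_apply_X_pow_of_comp_gaussDeriv_eq_zero {b : ι → 𝕜} {a c z : 𝕜}
    (ha : 2 * a ≠ 0) (hb : Tendsto b l (𝓝 a))
    (hJ : ∀ᶠ i in l, J i ∘ₗ gaussDeriv (b i) c = 0)
    (h1 : Tendsto (fun i => J i 1) l (𝓝 z)) (n : ℕ) :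
    ∃ w, Tendsto (fun i => J i (X ^ n)) l (𝓝 w) := by
  induction n using Nat.strong_induction_on with
  | _ n ih =>
    match n with
    | 0 => exact ⟨z, by simpa using h1⟩
    | m + 1 =>
      obtain ⟨u, hu⟩ := ih (m - 1) (by omega)
      obtain ⟨v, hv⟩ := ih m (by omega)
      have hrec : ∀ᶠ i in l, -(m * J i (X ^ (m - 1)) + c * J i (X ^ m)) / (2 * b i)
          = J i (X ^ (m + 1)) := by
        filter_upwards [hJ, (hb.const_mul 2).eventually_ne ha] with i hi hbi
        have := (J i).apply_gaussDeriv_X_pow (b i) c m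
        rw [← LinearMap.comp_apply, hi, LinearMap.zero_apply] at this
        rw [div_eq_iff hbi]
        linear_combination this
      exact ⟨_, (((hu.const_mul _).add (hv.const_mul c)).neg.div (hb.const_mul 2)
        ha).congr' hrec⟩

theorem exists_tendsto_of_comp_gaussDeriv_eq_zero [l.NeBot] {b : ι → 𝕜} {a c z : 𝕜}
    (ha : 2 * a ≠ 0) (hb : Tendsto b l (𝓝 a))
    (hJ : ∀ᶠ i in l, J i ∘ₗ gaussDeriv (b i) c = 0)
    (h1 : Tendsto (fun i => J i 1) l (𝓝 z)) :
    ∃ L : 𝕜[X] →ₗ[𝕜] 𝕜, L ∘ₗ gaussDeriv a c = 0 ∧ L 1 = z ∧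
      ∀ Q, Tendsto (fun i => J i Q) l (𝓝 (L Q)) := by
  choose f hf using exists_tendsto_apply_of_forall_X_pow
    (exists_tendsto_apply_X_pow_of_comp_gaussDeriv_eq_zero ha hb hJ h1)
  let L := linearMapOfTendsto f J (tendsto_pi_nhds.2 hf)
  refine ⟨L, ?_, tendsto_nhds_unique (hf 1) h1, hf⟩
  refine LinearMap.ext fun Q => tendsto_nhds_unique (hf _) ?_
  have hsplit : ∀ β, gaussDeriv a c Q = gaussDeriv β c Q + C (2 * (a - β)) * (X * Q) := by
    intro β
    simp only [gaussDeriv_apply, map_mul, map_sub]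
    ring
  have hlim := ((hb.const_sub a).const_mul 2).mul (hf (X * Q))
  rw [sub_self, mul_zero, zero_mul] at hlim
  refine hlim.congr' ?_
  filter_upwards [hJ] with i hi
  rw [hsplit (b i), map_add, ← LinearMap.comp_apply, hi, LinearMap.zero_apply, zero_add,
    ← smul_eq_C_mul, map_smul, smul_eq_mul]

end Limit

theorem integrable_pow_mul_cexp_quadratic {b : ℂ} (hb : b.re < 0) (c : ℂ) (n : ℕ) :
    Integrable fun x : ℝ => (x : ℂ) ^ n * cexp (b * x ^ 2 + c * x) := by
  -- half of the Gaussian absorbs `xⁿ`, the other half is integrable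
  have hβ : 0 < (-b / 2).re := by simp; linarith
  have hsplit : (fun x : ℝ => (x : ℂ) ^ n * cexp (b * x ^ 2 + c * x)) = fun x : ℝ =>
      ((x : ℂ) ^ n * cexp (-(-b / 2) * x ^ 2)) * cexp (-(-b / 2) * x ^ 2 + c * x + 0) := by
    ext x
    rw [mul_assoc, ← Complex.exp_add]
    ring_nf
  have hdecay : Tendsto (fun x : ℝ => (x : ℂ) ^ n * cexp (-(-b / 2) * x ^ 2)) (cocompact ℝ)
      (𝓝 0) := by
    rw [tendsto_zero_iff_norm_tendsto_zero]
    convert tendsto_rpow_abs_mul_exp_neg_mul_sq_cocompact hβ n using 2 with x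
    rw [norm_mul, norm_pow, norm_real, Real.norm_eq_abs, norm_cexp_neg_mul_sq, Real.rpow_natCast]
  rw [hsplit]
  refine (Continuous.locallyIntegrable (by fun_prop)).integrable_of_isBigO_cocompact ?_
    ((integrable_cexp_quadratic hβ c 0).integrableAtFilter _)
  simpa only [one_mul] using (hdecay.isBigO_one ℂ).mul
    (Asymptotics.isBigO_refl (fun x : ℝ => cexp (-(-b / 2) * x ^ 2 + c * x + 0)) _)

theorem integrable_eval_mul_cexp_quadratic {b : ℂ} (hb : b.re < 0) (c : ℂ) (Q : ℂ[X]) :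
    Integrable fun x : ℝ => Q.eval (x : ℂ) * cexp (b * x ^ 2 + c * x) := by
  simp_rw [eval_eq_sum_range, Finset.sum_mul, mul_assoc]
  exact integrable_finsetSum _ fun n _ =>
    (integrable_pow_mul_cexp_quadratic hb c n).const_mul _

def gaussMoment (b c : ℂ) (n : ℕ) : ℂ :=
  ∫ x : ℝ, (x : ℂ) ^ n * cexp (b * x ^ 2 + c * x)

/-- Built from the moments so that it is linear for every `b`; for `b.re < 0` it is
`Q ↦ ∫ Q(x) e^{bx² + cx} dx` (`gaussFunctional_apply`). -/
def gaussFunctional (b c : ℂ) : ℂ[X] →ₗ[ℂ] ℂ :=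
  lsum fun n => LinearMap.toSpanSingleton ℂ ℂ (gaussMoment b c n)

theorem gaussFunctional_apply {b : ℂ} (hb : b.re < 0) (c : ℂ) (Q : ℂ[X]) :
    gaussFunctional b c Q = ∫ x : ℝ, Q.eval (x : ℂ) * cexp (b * x ^ 2 + c * x) := by
  simp_rw [eval_eq_sum, Polynomial.sum_def, Finset.sum_mul, mul_assoc]
  rw [integral_finsetSum _ fun n _ => (integrable_pow_mul_cexp_quadratic hb c n).const_mul _]
  simp [gaussFunctional, lsum_apply, Polynomial.sum_def, gaussMoment, integral_const_mul]

theorem hasDerivAt_eval_mul_cexp_quadratic (b c : ℂ) (Q : ℂ[X]) (x : ℝ) :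
    HasDerivAt (fun y : ℝ => Q.eval (y : ℂ) * cexp (b * y ^ 2 + c * y))
      ((gaussDeriv b c Q).eval (x : ℂ) * cexp (b * x ^ 2 + c * x)) x := by
  have hquad : HasDerivAt (fun z : ℂ => b * z ^ 2 + c * z) (2 * b * x + c) (x : ℂ) := by
    refine (((hasDerivAt_pow 2 (x : ℂ)).const_mul b).add
      ((hasDerivAt_id (x : ℂ)).const_mul c)).congr_deriv ?_
    simp only [Nat.cast_ofNat, mul_one]
    ring
  refine (((Q.hasDerivAt (x : ℂ)).mul hquad.cexp).comp_ofReal).congr_deriv ?_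
  simp only [gaussDeriv_apply, eval_add, eval_mul, eval_C, eval_X]
  ring

theorem gaussFunctional_comp_gaussDeriv {b : ℂ} (hb : b.re < 0) (c : ℂ) :
    gaussFunctional b c ∘ₗ gaussDeriv b c = 0 := by
  refine LinearMap.ext fun Q => ?_
  rw [LinearMap.comp_apply, gaussFunctional_apply hb, LinearMap.zero_apply]
  exact integral_eq_zero_of_hasDerivAt_of_integrable (hasDerivAt_eval_mul_cexp_quadratic b c Q)
    (integrable_eval_mul_cexp_quadratic hb c _) (integrable_eval_mul_cexp_quadratic hb c Q)

theorem gaussFunctional_one {b : ℂ} (hb : b.re < 0) (c : ℂ) :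
    gaussFunctional b c 1 = (π / -b) ^ (1 / 2 : ℂ) * cexp (-c ^ 2 / (4 * b)) := by
  simpa [gaussFunctional_apply hb, neg_div] using integral_cexp_quadratic hb c 0

theorem ofReal_div_neg_mem_slitPlane {a : ℂ} (ha0 : a ≠ 0) (ha : a.re ≤ 0) {r : ℝ}
    (hr : 0 < r) : (r : ℂ) / -a ∈ slitPlane := by
  rw [mem_slitPlane_iff]
  rcases eq_or_ne a.im 0 with him | him
  · have hre : a.re < 0 := ha.lt_of_ne fun h => ha0 (Complex.ext h him)
    left
    simpa [div_re, him] using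
      div_pos (neg_pos.2 (mul_neg_of_pos_of_neg hr hre)) (normSq_pos.2 ha0)
  · right
    simp [div_im, him, hr.ne', ha0]

theorem tendsto_sub_ofReal_nhdsGT (a : ℂ) :
    Tendsto (fun ε : ℝ => a - ε) (𝓝[>] 0) (𝓝 a) := by
  refine ((continuous_const.sub continuous_ofReal).tendsto' 0 a ?_).mono_left nhdsWithin_le_nhds
  simp

theorem eventually_re_sub_ofReal_neg {a : ℂ} (ha : a.re ≤ 0) :
    ∀ᶠ ε : ℝ in 𝓝[>] 0, (a - ε).re < 0 := by
  filter_upwards [self_mem_nhdsWithin] with ε (hε : 0 < ε)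
  simp only [sub_re, ofReal_re]
  linarith

theorem tendsto_gaussFunctional_one {a : ℂ} (ha0 : a ≠ 0) (ha : a.re ≤ 0) (c : ℂ) :
    Tendsto (fun ε : ℝ => gaussFunctional (a - ε) c 1) (𝓝[>] 0)
      (𝓝 ((π / -a) ^ (1 / 2 : ℂ) * cexp (-c ^ 2 / (4 * a)))) := by
  have hcont :
      ContinuousAt (fun b : ℂ => (π / -b) ^ (1 / 2 : ℂ) * cexp (-c ^ 2 / (4 * b))) a :=
    ((continuousAt_const.div continuousAt_neg (neg_ne_zero.2 ha0)).cpow continuousAt_const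
      (ofReal_div_neg_mem_slitPlane ha0 ha pi_pos)).mul
      (continuousAt_const.div (continuousAt_const.mul continuousAt_id)
        (mul_ne_zero (by norm_num) ha0)).cexp
  refine (hcont.tendsto.comp (tendsto_sub_ofReal_nhdsGT a)).congr' ?_
  filter_upwards [eventually_re_sub_ofReal_neg ha] with ε hε
  exact (gaussFunctional_one hε c).symm

theorem exists_tendsto_integral_eval_mul_cexp_quadratic {a : ℂ} (ha0 : a ≠ 0) (ha : a.re ≤ 0)
    (c : ℂ) :
    ∃ L : ℂ[X] →ₗ[ℂ] ℂ, L ∘ₗ gaussDeriv a c = 0 ∧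
      L 1 = (π / -a) ^ (1 / 2 : ℂ) * cexp (-c ^ 2 / (4 * a)) ∧
      ∀ Q : ℂ[X], Tendsto
        (fun ε : ℝ => ∫ x : ℝ, Q.eval (x : ℂ) * cexp ((a - ε) * x ^ 2 + c * x))
        (𝓝[>] 0) (𝓝 (L Q)) := by
  have hre := eventually_re_sub_ofReal_neg ha
  obtain ⟨L, hL, hL1, hlim⟩ := exists_tendsto_of_comp_gaussDeriv_eq_zero
    (mul_ne_zero two_ne_zero ha0) (tendsto_sub_ofReal_nhdsGT a)
    (hre.mono fun ε hε => gaussFunctional_comp_gaussDeriv hε c)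
    (tendsto_gaussFunctional_one ha0 ha c)
  refine ⟨L, hL, hL1, fun Q => (hlim Q).congr' ?_⟩
  filter_upwards [hre] with ε hε
  exact gaussFunctional_apply hε c Q

theorem exists_tendsto_integral_complete_square {a : ℂ} (ha0 : a ≠ 0) (ha : a.re ≤ 0)
    (c : ℂ) (P : ℂ[X]) :
    ∃ A B : ℂ,
      Tendsto (fun ε : ℝ => ∫ x : ℝ, P.eval (x : ℂ) * cexp ((a - ε) * x ^ 2 + c * x))
        (𝓝[>] 0) (𝓝 A) ∧
      Tendsto (fun ε : ℝ => ∫ x : ℝ, P.eval (x - c / (2 * a)) * cexp ((a - ε) * x ^ 2))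
        (𝓝[>] 0) (𝓝 B) ∧
      A = cexp (-c ^ 2 / (4 * a)) * B := by
  obtain ⟨L, hL, hL1, hLlim⟩ := exists_tendsto_integral_eval_mul_cexp_quadratic ha0 ha c
  obtain ⟨L₀, hL₀, hL₀1, hL₀lim⟩ :=
    exists_tendsto_integral_eval_mul_cexp_quadratic ha0 ha 0
  have hshift := LinearMap.eq_smul_comp_taylor_of_comp_gaussDeriv_eq_zero
    (mul_ne_zero two_ne_zero ha0) hL hL₀ (e := cexp (-c ^ 2 / (4 * a)))
    (by rw [hL1, hL₀1]; simp; ring)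
  refine ⟨L P, L₀ (taylor (-c / (2 * a)) P), hLlim P, ?_, by rw [hshift]; rfl⟩
  simpa [taylor_eval, sub_eq_add_neg, neg_div] using hL₀lim (taylor (-c / (2 * a)) P)

/-- Completing the square in the regularized Gaussian integral: for `f ≠ 0`,
`K > 0`, `q : ℝ` and a polynomial `P` over `ℂ`, both regularized limits exist
and
`lim_{ε→0⁺} ∫ e^{iπfα²/(2K)} e^{(2πiq/K)α} P(α) e^{-εα²} dα
 = e^{-2πi q²/(Kf)} · lim_{ε→0⁺} ∫ e^{iπfα²/(2K)} P(α - 2q/f) e^{-εα²} dα`. -/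
theorem gaussian_complete_the_square (f K q : ℝ) (hf : f ≠ 0) (hK : 0 < K)
    (P : Polynomial ℂ) :
    ∃ A B : ℂ,
      Filter.Tendsto
        (fun ε : ℝ => ∫ α : ℝ,
          Complex.exp (Complex.I * (π : ℂ) * (f : ℂ) * (α : ℂ) ^ 2 / (2 * (K : ℂ))) *
            Complex.exp ((2 * (π : ℂ) * Complex.I * (q : ℂ) / (K : ℂ)) * (α : ℂ)) *
            P.eval (α : ℂ) * Complex.exp (-(ε : ℂ) * (α : ℂ) ^ 2))
        (𝓝[>] 0) (𝓝 A) ∧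
      Filter.Tendsto
        (fun ε : ℝ => ∫ α : ℝ,
          Complex.exp (Complex.I * (π : ℂ) * (f : ℂ) * (α : ℂ) ^ 2 / (2 * (K : ℂ))) *
            P.eval ((α : ℂ) - 2 * (q : ℂ) / (f : ℂ)) *
            Complex.exp (-(ε : ℂ) * (α : ℂ) ^ 2))
        (𝓝[>] 0) (𝓝 B) ∧
      A = Complex.exp (-(2 * (π : ℂ) * Complex.I * (q : ℂ) ^ 2) / ((K : ℂ) * (f : ℂ))) * B := by
  have hf' : (f : ℂ) ≠ 0 := ofReal_ne_zero.2 hf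
  have hK' : (K : ℂ) ≠ 0 := ofReal_ne_zero.2 hK.ne'
  have ha0 : I * π * f / (2 * K) ≠ 0 := by simp [hf', hK', pi_ne_zero, I_ne_zero]
  obtain ⟨A, B, hA, hB, hAB⟩ :=
    exists_tendsto_integral_complete_square ha0 (by simp [div_re, mul_re]) (2 * π * I * q / K) P
  refine ⟨A, B, hA.congr fun ε => ?_, hB.congr fun ε => ?_, ?_⟩
  · congr 1 with x
    rw [show (I * π * f / (2 * K) - ε) * (x : ℂ) ^ 2 + 2 * π * I * q / K * x
      = I * π * f * x ^ 2 / (2 * K) + 2 * π * I * q / K * x + -ε * x ^ 2 by ring,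
      Complex.exp_add, Complex.exp_add]
    ring
  · congr 1 with x
    rw [show 2 * π * I * q / K / (2 * (I * π * f / (2 * K))) = 2 * q / f by field_simp,
      show (I * π * f / (2 * K) - ε) * (x : ℂ) ^ 2
        = I * π * f * x ^ 2 / (2 * K) + -ε * x ^ 2 by ring, Complex.exp_add]
    ring
  · rw [hAB]
    congr 2
    field_simp
    ring
end
end

section
/- Let G be a finite simple graph in which every vertex has degree 1 or degree 3, and such that every connected component of G contains at least one vertex of degree 3. Then the number of vertices of degree 1 is at most 3 times the number of vertices of degree 3. Equivalently, writing N for the number of degree-1 vertices and I for the number of degree-3 vertices, the degree d° = (N+I)/2 satisfies I ≥ d°/2. -/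
/-!
Choose a root in every connected component and send each non-root vertex to the edge joining it
to a neighbour strictly closer to its root: this is injective, so `|V| ≤ E + c`, where `c` is the
number of components. Each component contains a trivalent vertex, so `c ≤ I` and
`N + I = |V| ≤ E + I`, while the handshake lemma gives `2E = N + 3I`; hence `N ≤ 3I`.
-/

open Finset

namespace SimpleGraph

variable {V : Type*} {G : SimpleGraph V}

lemma Reachable.exists_adj_dist_add_one_eq {u r : V} (h : G.Reachable u r) (hne : u ≠ r) :
    ∃ w, G.Adj u w ∧ G.dist w r + 1 = G.dist u r := by
  obtain ⟨p, hp⟩ := h.exists_walk_length_eq_dist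
  cases p with
  | nil => exact absurd rfl hne
  | @cons _ w _ hadj q =>
    refine ⟨w, hadj, ?_⟩
    have hle : G.dist w r ≤ q.length := G.dist_le q
    obtain ⟨q', hq'⟩ := q.reachable.exists_walk_length_eq_dist
    have hge : G.dist u r ≤ q'.length + 1 := G.dist_le (q'.cons hadj)
    simp only [Walk.length_cons] at hp
    omega

theorem card_vert_le_card_edgeSet_add_card_connectedComponent [Finite V] :
    Nat.card V ≤ Nat.card G.edgeSet + Nat.card G.ConnectedComponent := by
  set root : V → V := fun v => (G.connectedComponentMk v).out
  have root_reachable (v : V) : G.Reachable v (root v) :=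
    ConnectedComponent.exact (Quot.out_eq (G.connectedComponentMk v)).symm
  have root_eq_of_adj {u v : V} (h : G.Adj u v) : root u = root v := by
    simp only [root, ConnectedComponent.sound h.reachable]
  have step (v : V) : ∃ w, v ≠ root v → G.Adj v w ∧ G.dist w (root v) + 1 = G.dist v (root v) := by
    by_cases hv : v = root v
    · exact ⟨v, absurd hv⟩
    · obtain ⟨w, hw⟩ := (root_reachable v).exists_adj_dist_add_one_eq hv
      exact ⟨w, fun _ => hw⟩
  choose next hnext using step
  set R : Set V := {v | v = root v}
  have hroots : R.ncard ≤ Nat.card G.ConnectedComponent := by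
    rw [← Set.ncard_univ]
    refine Set.ncard_le_ncard_of_injOn G.connectedComponentMk (by simp) ?_
    intro a ha b hb hab
    rw [show a = root a from ha, show b = root b from hb]
    simp only [root, hab]
  have hnonroots : Rᶜ.ncard ≤ Nat.card G.edgeSet := by
    rw [← Nat.card_coe_set_eq]
    refine Set.ncard_le_ncard_of_injOn (fun v => s(v, next v)) (fun v hv => (hnext v hv).1) ?_
    rintro a ha b hb hab
    rcases Sym2.eq_iff.mp hab with ⟨hab, -⟩ | ⟨hab, hba⟩
    · exact hab
    · have hroot := root_eq_of_adj (hnext a ha).1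
      have ha' := (hnext a ha).2
      have hb' := (hnext b hb).2
      rw [hba] at ha' hroot
      rw [← hab, ← hroot] at hb'
      omega
  have hsplit := Set.ncard_add_ncard_compl R
  omega

theorem card_connectedComponent_le_card_of_forall_reachable (S : Finset V)
    (hS : ∀ v, ∃ w ∈ S, G.Reachable v w) : Nat.card G.ConnectedComponent ≤ #S := by
  rw [← Nat.card_eq_finsetCard]
  refine Nat.card_le_card_of_surjective (fun w : S => G.connectedComponentMk w) ?_
  rintro ⟨v⟩
  obtain ⟨w, hwS, hvw⟩ := hS v
  exact ⟨⟨w, hwS⟩, ConnectedComponent.sound hvw.symm⟩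

theorem sum_comp_degree_of_forall_degree_eq_one_or_three [Fintype V] [DecidableRel G.Adj]
    (f : ℕ → ℕ) (hdeg : ∀ v, G.degree v = 1 ∨ G.degree v = 3) :
    ∑ v, f (G.degree v) = f 1 * #{v | G.degree v = 1} + f 3 * #{v | G.degree v = 3} := by
  rw [card_filter, card_filter, mul_sum, mul_sum, ← sum_add_distrib]
  refine sum_congr rfl fun v _ => ?_
  rcases hdeg v with h | h <;> simp [h]

end SimpleGraph

/-- If every vertex of a finite simple graph has degree 1 or degree 3, and
every connected component contains at least one degree-3 (trivalent) vertex,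
then the number of degree-1 (univalent) vertices is at most 3 times the
number of degree-3 vertices (equivalently, `I ≥ d°/2` where
`d° = (N + I)/2`). -/
theorem univalent_le_three_mul_trivalent {V : Type*} [Fintype V]
    (G : SimpleGraph V) [DecidableRel G.Adj]
    (hdeg : ∀ v : V, G.degree v = 1 ∨ G.degree v = 3)
    (hcomp : ∀ v : V, ∃ w : V, G.Reachable v w ∧ G.degree w = 3) :
    (Finset.univ.filter fun v : V => G.degree v = 1).card ≤
      3 * (Finset.univ.filter fun v : V => G.degree v = 3).card := by
  classical
  have hforest := G.card_vert_le_card_edgeSet_add_card_connectedComponent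
  have hcomponents := G.card_connectedComponent_le_card_of_forall_reachable
    {v | G.degree v = 3} fun v => by simpa [and_comm] using hcomp v
  have hvertices := G.sum_comp_degree_of_forall_degree_eq_one_or_three (fun _ => 1) hdeg
  have hhandshake := G.sum_comp_degree_of_forall_degree_eq_one_or_three (fun d => d) hdeg
  rw [G.sum_degrees_eq_twice_card_edges] at hhandshake
  rw [Nat.card_eq_fintype_card, Nat.card_eq_fintype_card, ← G.edgeFinset_card] at hforest
  simp only [sum_const, card_univ, smul_eq_mul, mul_one, one_mul] at hvertices hhandshake
  omega
end

section
/- Let p be an odd prime, let k be a natural number, and let l be a natural number with l ≤ p-1. Then in ℤ/pℤ: ∑_{α=1}^{p-1} α^{2(k+1)} · ((α² - 1)/2)^l · (l!)^{-1} = ∑_{q=0}^{l} (-1)^{l-q} · (2^l · q! · (l-q)!)^{-1} · ε_p(2(k+q+1)), where (α²-1)/2 means (α²-1)·2^{-1} in ℤ/pℤ and all factorials appearing are invertible in ℤ/pℤ. -/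
/-!
Expand `((α² - 1)/2)^l` by the binomial theorem and exchange the two sums. What remains are the
power sums `∑_{α ∈ 𝔽_p^×} α^m`, which equal `-1` when `p - 1 ∣ m` and `0` otherwise, because the
character `α ↦ α^m` of the cyclic group `𝔽_p^×` is trivial exactly when `p - 1 ∣ m`.
-/

open Finset Nat

theorem FiniteField.sum_pow_of_ne_zero {K : Type*} [Field K] [Fintype K] {m : ℕ} (hm : m ≠ 0) :
    ∑ x : K, x ^ m = if Fintype.card K - 1 ∣ m then -1 else 0 := by
  classical
  rw [← FiniteField.sum_pow_units]
  calc ∑ x : K, x ^ m = ∑ x with x ≠ 0, x ^ m :=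
        (sum_filter_of_ne fun x _ hx => by rintro rfl; exact hx (zero_pow hm)).symm
    _ = ∑ x : {a : K // a ≠ 0}, (x : K) ^ m := sum_subtype _ (by simp) _
    _ = ∑ x : Kˣ, (x : K) ^ m := (Fintype.sum_equiv unitsEquivNeZero _ _ fun _ => rfl).symm

theorem ZMod.sum_range_eq_sum_univ {M : Type*} [AddCommMonoid M] (p : ℕ) [NeZero p]
    (f : ZMod p → M) :
    ∑ i ∈ range p, f i = ∑ x : ZMod p, f x :=
  sum_nbij' (fun i => (i : ZMod p)) ZMod.val (fun _ _ => mem_univ _)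
    (fun x _ => mem_range.2 (ZMod.val_lt x))
    (fun _ ha => ZMod.val_cast_of_lt (mem_range.1 ha))
    (fun x _ => ZMod.natCast_zmod_val x) (fun _ _ => rfl)

theorem ZMod.sum_Icc_pow {p m : ℕ} (hp : p.Prime) (hm : m ≠ 0) :
    ∑ α ∈ Icc 1 (p - 1), (α : ZMod p) ^ m = if p - 1 ∣ m then -1 else 0 := by
  have := Fact.mk hp
  have hrange : range p = insert 0 (Icc 1 (p - 1)) := by
    ext a; simp only [mem_range, mem_insert, mem_Icc]; have := hp.pos; omega
  have hsum := FiniteField.sum_pow_of_ne_zero (K := ZMod p) hm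
  rw [ZMod.card, ← ZMod.sum_range_eq_sum_univ, hrange, sum_insert (by simp)] at hsum
  simpa [zero_pow hm] using hsum

theorem sub_one_pow_eq_sum {R : Type*} [CommRing R] (x : R) (l : ℕ) :
    (x - 1) ^ l = ∑ q ∈ range (l + 1), (-1) ^ (l - q) * l.choose q * x ^ q := by
  rw [sub_eq_add_neg, add_pow]
  exact sum_congr rfl fun q _ => by ring

theorem Nat.cast_choose_mul_inv_factorial {K : Type*} [Field K] {l q : ℕ} (hq : q ≤ l)
    (hl : (l ! : K) ≠ 0) : (l.choose q : K) * (l ! : K)⁻¹ = ((q ! * (l - q)! : ℕ) : K)⁻¹ := by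
  rw [← choose_mul_factorial_mul_factorial hq, mul_assoc, cast_mul] at hl ⊢
  rw [mul_inv, ← mul_assoc, mul_inv_cancel₀ (left_ne_zero_of_mul hl), one_mul]

theorem pow_mul_sq_sub_one_div_two_pow_div_factorial_eq_sum {K : Type*} [Field K] (x : K)
    (k l : ℕ) (hl : (l ! : K) ≠ 0) :
    x ^ (2 * (k + 1)) * ((x ^ 2 - 1) * 2⁻¹) ^ l * (l ! : K)⁻¹ =
      ∑ q ∈ range (l + 1), (-1) ^ (l - q) * ((2 ^ l * q ! * (l - q)! : ℕ) : K)⁻¹ *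
        x ^ (2 * (k + q + 1)) := by
  rw [mul_pow, sub_one_pow_eq_sum, sum_mul, mul_sum, sum_mul]
  refine sum_congr rfl fun q hq => ?_
  rw [Nat.mul_assoc, cast_mul, mul_inv,
    ← Nat.cast_choose_mul_inv_factorial (mem_range_succ_iff.mp hq) hl, cast_pow, cast_ofNat,
    inv_pow]
  ring

theorem fermat_limit_central_sum_general (p k l : ℕ) (hp : p.Prime)
    (hl : l ≤ p - 1) :
    ∑ α ∈ Finset.Icc 1 (p - 1),
        ((α : ZMod p)) ^ (2 * (k + 1)) * (((α : ZMod p) ^ 2 - 1) * (2 : ZMod p)⁻¹) ^ l *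
          ((l.factorial : ZMod p))⁻¹ =
      ∑ q ∈ Finset.range (l + 1),
        (-1 : ZMod p) ^ (l - q) *
          (((2 ^ l * q.factorial * (l - q).factorial : ℕ) : ZMod p))⁻¹ *
          (if (p - 1) ∣ 2 * (k + q + 1) then (-1 : ZMod p) else 0) := by
  have := Fact.mk hp
  have hfact : (l ! : ZMod p) ≠ 0 := by
    rw [Ne, ZMod.natCast_eq_zero_iff, hp.dvd_factorial]
    have := hp.pos
    omega
  simp_rw [pow_mul_sq_sub_one_div_two_pow_div_factorial_eq_sum _ k l hfact]
  rw [sum_comm]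
  refine sum_congr rfl fun q _ => ?_
  rw [← mul_sum, ZMod.sum_Icc_pow hp (by omega)]

/-- The central mod-`p` computation in the strong Fermat limit theorem: for an
odd prime `p`, `k : ℕ` and `l ≤ p-1`, in `ℤ/pℤ`:
`∑_{α=1}^{p-1} α^{2(k+1)} ((α²-1)/2)^l (l!)⁻¹
  = ∑_{q=0}^{l} (-1)^{l-q} (2^l q! (l-q)!)⁻¹ ε_p(2(k+q+1))`
where `ε_p(m) = -1` if `p-1 ∣ m` and `0` otherwise. -/
theorem fermat_limit_central_sum (p k l : ℕ) (hp : p.Prime) (hodd : Odd p)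
    (hl : l ≤ p - 1) :
    ∑ α ∈ Finset.Icc 1 (p - 1),
        ((α : ZMod p)) ^ (2 * (k + 1)) * (((α : ZMod p) ^ 2 - 1) * (2 : ZMod p)⁻¹) ^ l *
          ((l.factorial : ZMod p))⁻¹ =
      ∑ q ∈ Finset.range (l + 1),
        (-1 : ZMod p) ^ (l - q) *
          (((2 ^ l * q.factorial * (l - q).factorial : ℕ) : ZMod p))⁻¹ *
          (if (p - 1) ∣ 2 * (k + q + 1) then (-1 : ZMod p) else 0) :=
  fermat_limit_central_sum_general p k l hp hl
end
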